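/- Let B_θ, B_z : (0,∞) → ℝ be C² with B_θ(r)² + B_z(r)² > 0 for all r, and let λ, α : (0,∞) → ℝ be C¹ and satisfy the ODE system dB_z/dr + α B_θ + λ B_z = 0 and dB_θ/dr + B_θ/r − α B_z + λ B_θ = 0. Define B = B_θ(r) e_θ + B_z(r) e_z and B_f⊥ = B_z(r) e_θ − B_θ(r) e_z on the region x²+y² > 0 of ℝ³. Then ∇×(∇×B) = (2αλ − dα/dr − λ·2B_θB_z/(r‖B‖²)) B_f⊥ + (dλ/dr − λ² + α² + λ(B_z² − B_θ²)/(r‖B‖²)) B, where ‖B‖² = B_θ(r)² + B_z(r)². Consequently, under quasistatic resistive evolution ∂B/∂t = −η∇×(∇×B), the topology-changing (B_f⊥) component vanishes exactly when 2αλ − dα/dr − 2λB_θB_z/(r‖B‖²) = 0. -/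

import Mathlib

open RealInnerProductSpace

/-- The curl `∇×V = (∂₂V₃ − ∂₃V₂, ∂₃V₁ − ∂₁V₃, ∂₁V₂ − ∂₂V₁)` of a vector field on ℝ³. -/
noncomputable def curl3 (V : EuclideanSpace ℝ (Fin 3) → EuclideanSpace ℝ (Fin 3))
    (x : EuclideanSpace ℝ (Fin 3)) : EuclideanSpace ℝ (Fin 3) :=
  (EuclideanSpace.equiv (Fin 3) ℝ).symm
    ![fderiv ℝ V x (EuclideanSpace.single 1 1) 2 - fderiv ℝ V x (EuclideanSpace.single 2 1) 1,
      fderiv ℝ V x (EuclideanSpace.single 2 1) 0 - fderiv ℝ V x (EuclideanSpace.single 0 1) 2,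
      fderiv ℝ V x (EuclideanSpace.single 0 1) 1 - fderiv ℝ V x (EuclideanSpace.single 1 1) 0]

/-- The cylindrical radius `r = √(x² + y²)`. -/
noncomputable def rad (p : EuclideanSpace ℝ (Fin 3)) : ℝ := Real.sqrt (p 0 ^ 2 + p 1 ^ 2)

/-- The azimuthal unit vector `e_θ = (−y/r, x/r, 0)`. -/
noncomputable def etheta (p : EuclideanSpace ℝ (Fin 3)) : EuclideanSpace ℝ (Fin 3) :=
  (EuclideanSpace.equiv (Fin 3) ℝ).symm ![-(p 1) / rad p, p 0 / rad p, 0]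

/-- The vertical unit vector `e_z = (0,0,1)`. -/
noncomputable def ez3 : EuclideanSpace ℝ (Fin 3) := EuclideanSpace.single 2 1

/-! For a cylindrical field `f(r) e_θ + g(r) e_z` one computes
`∇×(f e_θ + g e_z) = −g' e_θ + (f' + f/r) e_z`. By the ODE system,
`∇×B = λ B_f⊥ + α B = (λB_z + αB_θ) e_θ + (αB_z − λB_θ) e_z` is again cylindrical, so a second
application of the formula, with `B_θ'` and `B_z'` eliminated through the ODEs, expresses
`∇×∇×B` in the frame `(e_θ, e_z)`; rewriting it in the frame `(B_f⊥, B)` gives the identity.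
As `B_f⊥ ≠ 0` wherever `‖B‖ > 0`, the `B_f⊥` coefficient vanishes iff `∇×∇×B` is a multiple
of `B`. -/

open Filter Topology EuclideanSpace

local notation "ℝ³" => EuclideanSpace ℝ (Fin 3)

noncomputable def cylField (f g : ℝ → ℝ) (q : ℝ³) : ℝ³ :=
  f (rad q) • etheta q + g (rad q) • ez3

noncomputable def rotXY : ℝ³ →L[ℝ] ℝ³ :=
  ((EuclideanSpace.equiv (Fin 3) ℝ).symm : (Fin 3 → ℝ) →L[ℝ] ℝ³).comp
    (ContinuousLinearMap.pi ![-proj 1, proj 0, 0])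

@[simp] lemma rotXY_apply (q : ℝ³) (i : Fin 3) : rotXY q i = ![-(q 1), q 0, 0] i := by
  fin_cases i <;> simp [rotXY]

@[simp] lemma etheta_apply (p : ℝ³) (i : Fin 3) :
    etheta p i = ![-(p 1) / rad p, p 0 / rad p, 0] i := rfl

@[simp] lemma ez3_apply (i : Fin 3) : ez3 i = ![0, 0, 1] i := by
  fin_cases i <;> simp [ez3]

lemma rad_pos {p : ℝ³} (hp : 0 < p 0 ^ 2 + p 1 ^ 2) : 0 < rad p :=
  Real.sqrt_pos.2 hp

lemma rad_sq {p : ℝ³} (hp : 0 < p 0 ^ 2 + p 1 ^ 2) : rad p ^ 2 = p 0 ^ 2 + p 1 ^ 2 :=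
  Real.sq_sqrt hp.le

lemma isOpen_offAxis : IsOpen {q : ℝ³ | 0 < q 0 ^ 2 + q 1 ^ 2} :=
  isOpen_lt continuous_const (by fun_prop)

lemma hasFDerivAt_rad {p : ℝ³} (hp : 0 < p 0 ^ 2 + p 1 ^ 2) :
    HasFDerivAt rad
      ((p 0 / rad p) • proj (𝕜 := ℝ) 0 + (p 1 / rad p) • proj 1) p := by
  have hsq : HasFDerivAt (fun q : ℝ³ => q 0 ^ 2 + q 1 ^ 2)
      ((2 * p 0) • proj (𝕜 := ℝ) 0 + (2 * p 1) • proj 1) p := by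
    have hcoord (i : Fin 3) :
        HasFDerivAt (fun q : ℝ³ => q i ^ 2) ((2 * p i) • proj (𝕜 := ℝ) i) p := by
      simpa using ((proj (𝕜 := ℝ) i).hasFDerivAt (x := p)).pow 2
    exact (hcoord 0).add (hcoord 1)
  refine ((Real.hasDerivAt_sqrt hp.ne').comp_hasFDerivAt p hsq).congr_fderiv ?_
  have hr := (rad_pos hp).ne'
  ext v
  simp only [rad] at hr ⊢
  simp [field]

lemma etheta_eq_smul_rotXY (q : ℝ³) : etheta q = (rad q)⁻¹ • rotXY q := by
  ext i
  fin_cases i <;> simp [div_eq_inv_mul]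

lemma curl3_cylField {f g : ℝ → ℝ} {f' g' : ℝ} {p : ℝ³}
    (hp : 0 < p 0 ^ 2 + p 1 ^ 2)
    (hf : HasDerivAt f f' (rad p)) (hg : HasDerivAt g g' (rad p)) :
    curl3 (cylField f g) p = (-g') • etheta p + (f' + f (rad p) / rad p) • ez3 := by
  have hr := rad_pos hp
  have hrad := hasFDerivAt_rad hp
  -- `rotXY` is linear, so only scalar functions of `r` remain to be differentiated.
  have hfield : cylField f g =
      (fun q => f (rad q) / rad q) • ⇑rotXY + fun q => g (rad q) • ez3 := by
    funext q
    simp only [cylField, etheta_eq_smul_rotXY, smul_smul, Pi.add_apply, Pi.smul_apply']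
    rw [div_eq_mul_inv]
  have hD : HasFDerivAt ((fun q => f (rad q) / rad q) • ⇑rotXY + fun q => g (rad q) • ez3) _ p :=
    (((hf.div (hasDerivAt_id _) hr.ne').comp_hasFDerivAt p hrad).smul rotXY.hasFDerivAt).add
      ((hg.comp_hasFDerivAt p hrad).smul_const ez3)
  rw [curl3, hfield, hD.fderiv]
  ext i
  fin_cases i <;> simp <;> field_simp
  linear_combination (f (rad p) - rad p * f') * rad_sq hp

lemma Filter.EventuallyEq.curl3_eq {V W : ℝ³ → ℝ³} {p : ℝ³} (h : V =ᶠ[𝓝 p] W) :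
    curl3 V p = curl3 W p := by
  rw [curl3, curl3, h.fderiv_eq]

lemma etheta_ne_zero {p : ℝ³} (hp : 0 < p 0 ^ 2 + p 1 ^ 2) : etheta p ≠ 0 := by
  intro h
  have hr := (rad_pos hp).ne'
  have h0 : -p 1 / rad p = 0 := by simpa using congr($h 0)
  have h1 : p 0 / rad p = 0 := by simpa using congr($h 1)
  simp [hr] at h0 h1
  simp [h0, h1] at hp

lemma smul_etheta_add_smul_ez3_eq_zero_iff {p : ℝ³} (hp : 0 < p 0 ^ 2 + p 1 ^ 2) {a b : ℝ} :
    a • etheta p + b • ez3 = 0 ↔ a = 0 ∧ b = 0 := by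
  refine ⟨fun h => ?_, fun ⟨ha, hb⟩ => by simp [ha, hb]⟩
  have hb : b = 0 := by simpa using congr($h 2)
  simp only [hb, zero_smul, add_zero, smul_eq_zero] at h
  exact ⟨h.resolve_right (etheta_ne_zero hp), hb⟩

lemma eq_smul_iff_of_eq_smul_add_smul {E : Type*} [AddCommGroup E] [Module ℝ E]
    {x v w : E} {a b : ℝ} (hw : w ≠ 0) (h : x = a • w + b • v) : x = b • v ↔ a = 0 := by
  rw [h, add_eq_right, smul_eq_zero, or_iff_left hw]

theorem stmt_15_general (Bθ Bz Bθ' Bz' lam alp lam' alp' : ℝ → ℝ)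
    (hBθ : ∀ r > (0:ℝ), HasDerivAt Bθ (Bθ' r) r)
    (hBz : ∀ r > (0:ℝ), HasDerivAt Bz (Bz' r) r)
    (hlam : ∀ r > (0:ℝ), HasDerivAt lam (lam' r) r)
    (halp : ∀ r > (0:ℝ), HasDerivAt alp (alp' r) r)
    (hpos : ∀ r > (0:ℝ), 0 < Bθ r ^ 2 + Bz r ^ 2)
    (hode1 : ∀ r > (0:ℝ), Bz' r + alp r * Bθ r + lam r * Bz r = 0)
    (hode2 : ∀ r > (0:ℝ), Bθ' r + Bθ r / r - alp r * Bz r + lam r * Bθ r = 0)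
    (B Bf : EuclideanSpace ℝ (Fin 3) → EuclideanSpace ℝ (Fin 3))
    (hB : ∀ p, B p = Bθ (rad p) • etheta p + Bz (rad p) • ez3)
    (hBf : ∀ p, Bf p = Bz (rad p) • etheta p - Bθ (rad p) • ez3) :
    ∀ p : EuclideanSpace ℝ (Fin 3), 0 < p 0 ^ 2 + p 1 ^ 2 →
      curl3 (curl3 B) p =
        (2 * alp (rad p) * lam (rad p) - alp' (rad p) -
            lam (rad p) * (2 * Bθ (rad p) * Bz (rad p)) /
              (rad p * (Bθ (rad p) ^ 2 + Bz (rad p) ^ 2))) • Bf p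
        + (lam' (rad p) - lam (rad p) ^ 2 + alp (rad p) ^ 2 +
            lam (rad p) * (Bz (rad p) ^ 2 - Bθ (rad p) ^ 2) /
              (rad p * (Bθ (rad p) ^ 2 + Bz (rad p) ^ 2))) • B p ∧
      (curl3 (curl3 B) p =
          (lam' (rad p) - lam (rad p) ^ 2 + alp (rad p) ^ 2 +
            lam (rad p) * (Bz (rad p) ^ 2 - Bθ (rad p) ^ 2) /
              (rad p * (Bθ (rad p) ^ 2 + Bz (rad p) ^ 2))) • B p ↔
        2 * alp (rad p) * lam (rad p) - alp' (rad p) -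
            lam (rad p) * (2 * Bθ (rad p) * Bz (rad p)) /
              (rad p * (Bθ (rad p) ^ 2 + Bz (rad p) ^ 2)) = 0) := by
  intro p hp
  have hr := rad_pos hp
  have hcurlB : curl3 B =ᶠ[𝓝 p]
      cylField (fun t => lam t * Bz t + alp t * Bθ t) (fun t => alp t * Bz t - lam t * Bθ t) := by
    filter_upwards [isOpen_offAxis.mem_nhds hp] with q hq
    have hrq := rad_pos hq
    rw [show B = cylField Bθ Bz from funext hB, curl3_cylField hq (hBθ _ hrq) (hBz _ hrq),
      cylField]
    congr 2 <;> linarith [hode1 _ hrq, hode2 _ hrq]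
  have hN := (hpos _ hr).ne'
  have hBf0 : Bf p ≠ 0 := by
    rw [hBf, sub_eq_add_neg, ← neg_smul, Ne, smul_etheta_add_smul_ez3_eq_zero_iff hp]
    rintro ⟨hz, hθ⟩
    exact hN (by rw [hz, neg_eq_zero.1 hθ]; ring)
  refine ⟨?h, eq_smul_iff_of_eq_smul_add_smul hBf0 ?h⟩
  rw [hcurlB.curl3_eq,
    curl3_cylField hp (((hlam _ hr).fun_mul (hBz _ hr)).fun_add ((halp _ hr).fun_mul (hBθ _ hr)))
      (((halp _ hr).fun_mul (hBz _ hr)).fun_sub ((hlam _ hr).fun_mul (hBθ _ hr))), hBf, hB]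
  have hBz' : Bz' (rad p) = -(alp (rad p) * Bθ (rad p)) - lam (rad p) * Bz (rad p) := by
    linarith [hode1 _ hr]
  have hBθ' :
      Bθ' (rad p) = alp (rad p) * Bz (rad p) - lam (rad p) * Bθ (rad p) - Bθ (rad p) / rad p := by
    linarith [hode2 _ hr]
  match_scalars <;> rw [hBz', hBθ'] <;> field_simp <;> ring

/-- under the flux-rope ODE system with C¹ `λ, α`,
`∇×(∇×B) = (2αλ − α' − 2λB_θB_z/(r‖B‖²)) B_f⊥ + (λ' − λ² + α² + λ(B_z² − B_θ²)/(r‖B‖²)) B`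
on the region `x² + y² > 0`; consequently under `∂B/∂t = −η∇×(∇×B)` the
topology-changing (`B_f⊥`) component vanishes exactly when
`2αλ − α' − 2λB_θB_z/(r‖B‖²) = 0`. -/
theorem stmt_15 (Bθ Bz Bθ' Bz' lam alp lam' alp' : ℝ → ℝ)
    (hBθ : ∀ r > (0:ℝ), HasDerivAt Bθ (Bθ' r) r)
    (hBz : ∀ r > (0:ℝ), HasDerivAt Bz (Bz' r) r)
    (hlam : ∀ r > (0:ℝ), HasDerivAt lam (lam' r) r)
    (halp : ∀ r > (0:ℝ), HasDerivAt alp (alp' r) r)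
    (hlamc : ContinuousOn lam' (Set.Ioi 0)) (halpc : ContinuousOn alp' (Set.Ioi 0))
    (hpos : ∀ r > (0:ℝ), 0 < Bθ r ^ 2 + Bz r ^ 2)
    (hode1 : ∀ r > (0:ℝ), Bz' r + alp r * Bθ r + lam r * Bz r = 0)
    (hode2 : ∀ r > (0:ℝ), Bθ' r + Bθ r / r - alp r * Bz r + lam r * Bθ r = 0)
    (B Bf : EuclideanSpace ℝ (Fin 3) → EuclideanSpace ℝ (Fin 3))
    (hB : ∀ p, B p = Bθ (rad p) • etheta p + Bz (rad p) • ez3)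
    (hBf : ∀ p, Bf p = Bz (rad p) • etheta p - Bθ (rad p) • ez3) :
    ∀ p : EuclideanSpace ℝ (Fin 3), 0 < p 0 ^ 2 + p 1 ^ 2 →
      curl3 (curl3 B) p =
        (2 * alp (rad p) * lam (rad p) - alp' (rad p) -
            lam (rad p) * (2 * Bθ (rad p) * Bz (rad p)) /
              (rad p * (Bθ (rad p) ^ 2 + Bz (rad p) ^ 2))) • Bf p
        + (lam' (rad p) - lam (rad p) ^ 2 + alp (rad p) ^ 2 +
            lam (rad p) * (Bz (rad p) ^ 2 - Bθ (rad p) ^ 2) /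
              (rad p * (Bθ (rad p) ^ 2 + Bz (rad p) ^ 2))) • B p ∧
      (curl3 (curl3 B) p =
          (lam' (rad p) - lam (rad p) ^ 2 + alp (rad p) ^ 2 +
            lam (rad p) * (Bz (rad p) ^ 2 - Bθ (rad p) ^ 2) /
              (rad p * (Bθ (rad p) ^ 2 + Bz (rad p) ^ 2))) • B p ↔
        2 * alp (rad p) * lam (rad p) - alp' (rad p) -
            lam (rad p) * (2 * Bθ (rad p) * Bz (rad p)) /
              (rad p * (Bθ (rad p) ^ 2 + Bz (rad p) ^ 2)) = 0) :=
  stmt_15_general Bθ Bz Bθ' Bz' lam alp lam' alp' hBθ hBz hlam halp hpos hode1 hode2 B Bf hB hBf
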